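/- Let m = a·d, n = b·d with gcd(a,b) = 1 and a odd. Then T_n(x) − T_m(y) = ∏_{k=0}^{⌊d/2⌋} C_k(x,y), where C_k(x,y) = E_{2kπ/d}(T_b(x), T_a(y)), E_μ(x,y) = x² + y² − 2cos(μ)xy − 4sin²(μ) for μ ≢ 0 mod π, E_0(x,y) = x − y, and E_π(x,y) = x + y. -/

import Mathlib

open Polynomial Real

/-- The monic Chebyshev polynomials of the first kind. -/
noncomputable def T : ℕ → Polynomial ℝ
  | 0 => 2
  | 1 => X
  | n + 2 => X * T (n + 1) - T n

/-- The Lissajous ellipse polynomial, with degenerate cases `E 0 = x − y`, `E π = x + y`. -/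
noncomputable def E (μ x y : ℝ) : ℝ :=
  if μ = 0 then x - y
  else if μ = Real.pi then x + y
  else x ^ 2 + y ^ 2 - 2 * Real.cos μ * x * y - 4 * Real.sin μ ^ 2

/-!
Every real `u` is `z + z⁻¹` for some `z ∈ ℂˣ`, and then `T_n(u) = zⁿ + z⁻ⁿ`. As `T_{bd} = T_d ∘ T_b`,
it suffices to factor `T_d(u) − T_d(v)`. For `u = z + z⁻¹`, `v = w + w⁻¹` and `ζ` a primitive `d`-th
root of unity, `T_d(u) − T_d(v) = ∏_{j<d} (u − (ζʲw + ζ⁻ʲw⁻¹))`, since each factor equals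
`(z − ζʲw)(1 − ζ⁻ʲ(zw)⁻¹)`. The factors `j` and `d − j` multiply to `E_{2jπ/d}(u, v)`; the unpaired
factors `j = 0` and `j = d/2` are `u − v` and `u + v`.
-/

theorem T_eq_chebyshev_C : ∀ n : ℕ, T n = Chebyshev.C ℝ n
  | 0 => by simp [T]
  | 1 => by simp [T]
  | n + 2 => by
    rw [T, T_eq_chebyshev_C (n + 1), T_eq_chebyshev_C n]
    exact_mod_cast (Chebyshev.C_add_two ℝ n).symm

theorem T_eval_mul (m n : ℕ) (x : ℝ) : (T (m * n)).eval x = (T m).eval ((T n).eval x) := by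
  simp only [T_eq_chebyshev_C, Nat.cast_mul, Chebyshev.C_mul, eval_comp]

def joukowski {K : Type*} [DivisionRing K] (z : K) : K := z + z⁻¹

theorem joukowski_neg {K : Type*} [DivisionRing K] (z : K) : joukowski (-z) = -joukowski z := by
  rw [joukowski, joukowski, inv_neg, neg_add]

theorem Complex.exists_joukowski_eq (c : ℂ) : ∃ z : ℂ, z ≠ 0 ∧ joukowski z = c := by
  obtain ⟨r, hr⟩ := IsAlgClosed.exists_pow_nat_eq (c ^ 2 - 4) two_pos
  have hprod : (c + r) / 2 * ((c - r) / 2) = 1 := by linear_combination -hr / 4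
  refine ⟨(c + r) / 2, left_ne_zero_of_mul_eq_one hprod, ?_⟩
  rw [joukowski, inv_eq_of_mul_eq_one_right hprod]
  ring

theorem ofReal_T_eval_eq_joukowski (n : ℕ) {x : ℝ} {z : ℂ} (hz : z ≠ 0)
    (hx : joukowski z = x) : (((T n).eval x : ℝ) : ℂ) = joukowski (z ^ n) := by
  rw [T_eq_chebyshev_C, ← Complex.coe_algebraMap, Chebyshev.algebraMap_eval_C,
    Complex.coe_algebraMap, ← hx, joukowski, joukowski, ← inv_pow, ← dickson_one_one_eq_chebyshev_C]
  exact_mod_cast dickson_one_one_eval_add_inv z z⁻¹ (mul_inv_cancel₀ hz) n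

theorem IsPrimitiveRoot.pow_sub_pow_eq_prod_range {R : Type*} [CommRing R] [IsDomain R]
    {ζ : R} {n : ℕ} (hζ : IsPrimitiveRoot ζ n) (hn : 0 < n) (x y : R) :
    x ^ n - y ^ n = ∏ i ∈ Finset.range n, (x - ζ ^ i * y) := by
  simpa [eval_prod] using congrArg (eval x) (X_pow_sub_C_eq_prod hζ hn (rfl : y ^ n = y ^ n))

theorem IsPrimitiveRoot.prod_range_joukowski_sub {K : Type*} [Field K] {ζ : K} {n : ℕ}
    (hζ : IsPrimitiveRoot ζ n) (hn : 0 < n) {z w : K} (hz : z ≠ 0) (hw : w ≠ 0) :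
    ∏ i ∈ Finset.range n, (joukowski z - joukowski (ζ ^ i * w)) =
      joukowski (z ^ n) - joukowski (w ^ n) := by
  have hζ0 : ζ ≠ 0 := hζ.ne_zero hn.ne'
  have hfactor : ∀ i ∈ Finset.range n, joukowski z - joukowski (ζ ^ i * w) =
      (z - ζ ^ i * w) * (1 - ζ⁻¹ ^ i * (z * w)⁻¹) := by
    intro i _
    have : ζ ^ i ≠ 0 := pow_ne_zero i hζ0
    rw [joukowski, joukowski, inv_pow]
    field_simp
    ring
  rw [Finset.prod_congr rfl hfactor, Finset.prod_mul_distrib,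
    ← hζ.pow_sub_pow_eq_prod_range hn, ← hζ.inv.pow_sub_pow_eq_prod_range hn]
  simp only [joukowski, one_pow, inv_pow, mul_pow]
  field_simp
  ring

theorem Finset.prod_range_eq_prod_range_half_pair {M : Type*} [CommMonoid M] {n : ℕ}
    (hn : 0 < n) (f : ℕ → M) :
    ∏ i ∈ range n, f i =
      ∏ k ∈ range (n / 2 + 1), if k = 0 ∨ 2 * k = n then f k else f k * f (n - k) := by
  have hsplit : ∀ k, (if k = 0 ∨ 2 * k = n then f k else f k * f (n - k)) =
      f k * if ¬(k = 0 ∨ 2 * k = n) then f (n - k) else 1 := by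
    intro k; split_ifs <;> simp
  rw [Finset.prod_congr rfl fun k _ => hsplit k, prod_mul_distrib, ← prod_filter,
    ← prod_range_mul_prod_Ico f (show n / 2 + 1 ≤ n by omega)]
  congr 1
  apply prod_nbij' (n - ·) (n - ·) <;> intro i hi <;>
    simp only [mem_Ico, mem_filter, mem_range, not_or] at hi ⊢
  all_goals first | omega | rw [Nat.sub_sub_self hi.2.le]

-- For `c = exp(iμ)`: `joukowski c = 2 cos μ` and `4 - joukowski c ^ 2 = 4 sin² μ`.
theorem sq_add_sq_sub_eq_mul_joukowski {K : Type*} [Field K] {c w : K} (hc : c ≠ 0)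
    (hw : w ≠ 0) (x : K) :
    x ^ 2 + joukowski w ^ 2 - joukowski c * x * joukowski w - (4 - joukowski c ^ 2) =
      (x - joukowski (c * w)) * (x - joukowski (c⁻¹ * w)) := by
  simp only [joukowski]
  field_simp
  ring

theorem E_zero (x y : ℝ) : E 0 x y = x - y := by simp [E]

theorem E_pi (x y : ℝ) : E π x y = x + y := by simp [E, pi_ne_zero]

theorem ofReal_E_eq_mul {μ : ℝ} (h0 : μ ≠ 0) (hπ : μ ≠ π) (x y : ℝ) {w : ℂ} (hw : w ≠ 0)
    (hy : joukowski w = y) :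
    (E μ x y : ℂ) = (x - joukowski (Complex.exp (μ * Complex.I) * w)) *
      (x - joukowski ((Complex.exp (μ * Complex.I))⁻¹ * w)) := by
  have hcos : 2 * Complex.cos μ = joukowski (Complex.exp (μ * Complex.I)) := by
    rw [Complex.two_cos, neg_mul, Complex.exp_neg, joukowski]
  rw [← sq_add_sq_sub_eq_mul_joukowski (Complex.exp_ne_zero _) hw, ← hcos, hy, E,
    if_neg h0, if_neg hπ]
  push_cast
  linear_combination -4 * Complex.sin_sq_add_cos_sq (μ : ℂ)

theorem ofReal_E_two_mul_pi_div {d k : ℕ} (hk : k ≤ d / 2) (x y : ℝ) {w : ℂ} (hw : w ≠ 0)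
    (hy : joukowski w = y) {ζ : ℂ} (hζ : ζ = Complex.exp (2 * π * Complex.I / d)) :
    (E (2 * k * π / d) x y : ℂ) =
      if k = 0 ∨ 2 * k = d then x - joukowski (ζ ^ k * w)
      else (x - joukowski (ζ ^ k * w)) * (x - joukowski (ζ ^ (d - k) * w)) := by
  rcases Nat.eq_zero_or_pos k with rfl | hk0
  · simp [E_zero, ← hy]
  have hd : 0 < d := by omega
  have hζk : ζ ^ k = Complex.exp (↑(2 * k * π / d) * Complex.I) := by
    rw [hζ, ← Complex.exp_nat_mul]
    push_cast
    ring_nf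
  split_ifs with h2k
  · have hμ : 2 * k * π / d = π := by
      rw [div_eq_iff (by positivity)]
      have : (2 * k : ℝ) = d := by exact_mod_cast h2k.resolve_left hk0.ne'
      rw [← this]; ring
    rw [hζk, hμ, Complex.exp_pi_mul_I, E_pi, neg_one_mul, joukowski_neg, hy]
    push_cast
    ring
  · have hdR : (0 : ℝ) < d := by exact_mod_cast hd
    have h2kR : 2 * (k : ℝ) < d := by norm_cast; omega
    have hμ0 : 2 * k * π / d ≠ 0 := by positivity
    have hμπ : 2 * k * π / d ≠ π := by
      rw [ne_eq, div_eq_iff hdR.ne']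
      nlinarith [pi_pos]
    have hζd : ζ ^ d = 1 := hζ ▸ (Complex.isPrimitiveRoot_exp d hd.ne').pow_eq_one
    have hζdk : ζ ^ (d - k) = (ζ ^ k)⁻¹ := by
      rw [pow_sub₀ _ (hζ ▸ Complex.exp_ne_zero _) (by omega), hζd, one_mul]
    rw [ofReal_E_eq_mul hμ0 hμπ x y hw hy, hζdk, hζk]

theorem T_eval_sub_T_eval_eq_prod_E {d : ℕ} (hd : 0 < d) (u v : ℝ) :
    (T d).eval u - (T d).eval v = ∏ k ∈ Finset.range (d / 2 + 1), E (2 * k * π / d) u v := by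
  obtain ⟨z, hz, hzu⟩ := Complex.exists_joukowski_eq u
  obtain ⟨w, hw, hwv⟩ := Complex.exists_joukowski_eq v
  apply Complex.ofReal_injective
  push_cast
  rw [ofReal_T_eval_eq_joukowski d hz hzu, ofReal_T_eval_eq_joukowski d hw hwv,
    ← (Complex.isPrimitiveRoot_exp d hd.ne').prod_range_joukowski_sub hd hz hw,
    Finset.prod_range_eq_prod_range_half_pair hd]
  refine Finset.prod_congr rfl fun k hk => ?_
  rw [ofReal_E_two_mul_pi_div (Nat.lt_succ_iff.mp (Finset.mem_range.mp hk)) u v hw hwv rfl,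
    ← hzu]

theorem chebyshev_diff_two_var_factorization_general (a b d : ℕ) (hd : 0 < d) (x y : ℝ) :
    (T (b * d)).eval x - (T (a * d)).eval y =
      ∏ k ∈ Finset.range (d / 2 + 1),
        E (2 * (k : ℝ) * Real.pi / d) ((T b).eval x) ((T a).eval y) := by
  rw [mul_comm b d, mul_comm a d, T_eval_mul, T_eval_mul]
  exact T_eval_sub_T_eval_eq_prod_E hd _ _

theorem chebyshev_diff_two_var_factorization (a b d : ℕ) (hd : 0 < d)
    (hab : Nat.Coprime a b) (ha : Odd a) (x y : ℝ) :
    (T (b * d)).eval x - (T (a * d)).eval y =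
      ∏ k ∈ Finset.range (d / 2 + 1),
        E (2 * (k : ℝ) * Real.pi / d) ((T b).eval x) ((T a).eval y) :=
  chebyshev_diff_two_var_factorization_general a b d hd x y
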